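/- arXiv:2404.06513 — 2 statements merged into one kernel-verified Lean document; each statement's English description precedes it below -/
import Mathlib

section
/- Let n, r, t, ℓ be natural numbers with t ≤ r, r ≤ ℓ, and 2r ≤ ℓ, and suppose n is sufficiently large relative to ℓ (say n ≥ 4ℓ²). Then C(r,t) · t! · C(n,ℓ) · C(n, ℓ−(2r−t)) / (C(n−2r, ℓ−r))² ≤ (1 + Kℓ²/n) · nᵗ · C(ℓ−r, r−t) / C(ℓ,r) for some absolute constant K. -/
private lemma pow_aux (x : ℝ) (hx : 0 ≤ x) :
    ∀ k : ℕ, (1 + x) ^ k ≤ 1 + k * x * (1 + x) ^ k := by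
  intro k
  induction k with
  | zero => simp
  | succ k ih =>
    have h1 : (1:ℝ) ≤ (1 + x) ^ (k+1) := one_le_pow₀ (by linarith)
    have h2 : (0:ℝ) ≤ (1 + x) ^ k := by positivity
    rw [pow_succ] at *
    push_cast
    nlinarith [ih, h1, h2]

private lemma pow_bound (x : ℝ) (k : ℕ) (hx : 0 ≤ x) (h : (k : ℝ) * x ≤ 2) :
    (1 + x) ^ k ≤ 1 + 8 * ((k : ℝ) * x) := by
  have h8 : (1 + x) ^ k ≤ 8 := by
    have h1 : (1 + x) ^ k ≤ Real.exp x ^ k := by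
      apply pow_le_pow_left₀ (by linarith)
      linarith [Real.add_one_le_exp x]
    have h2 : Real.exp x ^ k = Real.exp ((k : ℝ) * x) := (Real.exp_nat_mul x k).symm
    have h3 : Real.exp ((k : ℝ) * x) ≤ Real.exp 2 := Real.exp_le_exp.2 h
    have h4 : Real.exp 2 < 8 := by
      have := Real.exp_one_lt_d9
      have h5 : Real.exp 2 = Real.exp 1 * Real.exp 1 := by
        rw [← Real.exp_add]; norm_num
      nlinarith [Real.exp_pos 1]
    calc (1 + x) ^ k ≤ Real.exp x ^ k := h1
      _ = Real.exp ((k:ℝ) * x) := h2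
      _ ≤ Real.exp 2 := h3
      _ ≤ 8 := by linarith
  have haux := pow_aux x hx k
  have hkx : 0 ≤ (k : ℝ) * x := by positivity
  nlinarith [haux, h8, hkx]

set_option maxHeartbeats 2000000 in
/-- Sharp binomial coefficient estimate: there is an absolute constant `K` such that
for all `n, r, t, ℓ` with `t ≤ r`, `r ≤ ℓ`, `2r ≤ ℓ` and `n ≥ 4ℓ²`,
`C(r,t)·t!·C(n,ℓ)·C(n, ℓ−(2r−t)) / C(n−2r, ℓ−r)² ≤ (1 + Kℓ²/n)·nᵗ·C(ℓ−r, r−t)/C(ℓ,r)`. -/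
theorem stmt2 :
    ∃ K : ℝ, 0 < K ∧
      ∀ n r t ℓ : ℕ, t ≤ r → r ≤ ℓ → 2 * r ≤ ℓ → 4 * ℓ ^ 2 ≤ n →
        (r.choose t * t.factorial * n.choose ℓ * n.choose (ℓ - (2 * r - t)) : ℝ) /
            ((n - 2 * r).choose (ℓ - r) : ℝ) ^ 2 ≤
          (1 + K * ℓ ^ 2 / n) * (n : ℝ) ^ t * ((ℓ - r).choose (r - t) : ℝ) /
            (ℓ.choose r : ℝ) := by
  refine ⟨64, by norm_num, ?_⟩
  intro n r t ℓ htr hrl h2rl hn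
  -- trivial case ℓ = 0
  rcases Nat.eq_zero_or_pos ℓ with hℓ0 | hℓpos
  · have hr0 : r = 0 := by omega
    have ht0 : t = 0 := by omega
    subst hℓ0 hr0 ht0
    simp [Nat.choose]
  -- main case
  have hℓ1 : 1 ≤ ℓ := hℓpos
  have hℓsq : ℓ ≤ ℓ ^ 2 := by nlinarith
  have h4ℓ : 4 * ℓ ≤ n := by nlinarith
  have hℓn : ℓ ≤ n := by omega
  have hℓ''n : ℓ - 2 * r + t ≤ n := by omega
  have hℓrn : ℓ - r ≤ n - 2 * r := by omega
  have hrtℓ : r - t ≤ ℓ - r := by omega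
  have hn0 : (0:ℝ) < n := by
    have : 0 < n := by omega
    exact_mod_cast this
  -- rewrite subtraction arguments
  rw [show ℓ - (2 * r - t) = ℓ - 2 * r + t from by omega]
  -- cast all binomial coefficients to factorial quotients
  rw [Nat.cast_choose ℝ hℓn, Nat.cast_choose ℝ hℓ''n, Nat.cast_choose ℝ hℓrn,
    Nat.cast_choose ℝ hrtℓ, Nat.cast_choose ℝ hrl, Nat.cast_choose ℝ htr,
    show n - 2 * r - (ℓ - r) = n - ℓ - r from by omega,
    show ℓ - r - (r - t) = ℓ - 2 * r + t from by omega,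
    show n - (ℓ - 2 * r + t) = n - ℓ - r + (3 * r - t) from by omega]
  -- nonzeroness
  have hF1 : ((ℓ.factorial : ℝ)) ≠ 0 := by positivity
  have hF2 : (((ℓ - 2*r + t).factorial : ℝ)) ≠ 0 := by positivity
  have hF3 : (((ℓ - r).factorial : ℝ)) ≠ 0 := by positivity
  have hF4 : (((r - t).factorial : ℝ)) ≠ 0 := by positivity
  have hF6 : ((t.factorial : ℝ)) ≠ 0 := by positivity
  have hG1 : (((n - ℓ).factorial : ℝ)) ≠ 0 := by positivity
  have hG2 : (((n - ℓ - r + (3*r - t)).factorial : ℝ)) ≠ 0 := by positivity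
  have hG3 : (((n - ℓ - r).factorial : ℝ)) ≠ 0 := by positivity
  have hM : (((n - 2*r).factorial : ℝ)) ≠ 0 := by positivity
  have hne : (n:ℝ) ≠ 0 := ne_of_gt hn0
  -- abbreviations
  set c : ℝ := 1 + (64:ℝ) * ℓ ^ 2 / n with hc
  have hc1 : (1:ℝ) ≤ c := by
    rw [hc]
    have : (0:ℝ) ≤ (64:ℝ) * (ℓ:ℝ) ^ 2 / n := by positivity
    linarith
  -- the key inequality (★')
  set m : ℕ := n - 2 * ℓ with hm
  have hm2 : 2 * ℓ ^ 2 ≤ m := by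
    have : 2 * ℓ ^ 2 + 2 * ℓ ≤ 4 * ℓ ^ 2 := by nlinarith
    omega
  have hmpos : 0 < m := by nlinarith
  have hmR : (0:ℝ) < (m:ℝ) := by exact_mod_cast hmpos
  have hnm : (n:ℝ) = (m:ℝ) + 2 * ℓ := by
    have : n = m + 2 * ℓ := by omega
    exact_mod_cast congrArg (Nat.cast (R := ℝ)) this
  -- power bound : n^k ≤ c * m^k  for k = 4r - t
  have main_pow : (n:ℝ) ^ (4*r - t) ≤ c * (m:ℝ) ^ (4*r - t) := by
    set k : ℕ := 4*r - t with hk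
    have hk2ℓ : (k:ℝ) ≤ 2 * ℓ := by exact_mod_cast (show k ≤ 2 * ℓ by omega)
    set x : ℝ := 2 * ℓ / m with hx
    have hx0 : 0 ≤ x := by positivity
    have hkx : (k:ℝ) * x ≤ 2 := by
      have hrw : (k:ℝ) * x = (k:ℝ) * (2 * ℓ) / m := by rw [hx]; ring
      rw [hrw, div_le_iff₀ hmR]
      have hmc : (2:ℝ) * ℓ^2 ≤ m := by exact_mod_cast hm2
      nlinarith [hk2ℓ, hmc, Nat.cast_nonneg (α := ℝ) ℓ]
    have hb := pow_bound x k hx0 hkx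
    have hsplit : (n:ℝ) ^ k = (m:ℝ) ^ k * (1 + x) ^ k := by
      rw [← mul_pow]
      congr 1
      rw [hnm, hx]
      field_simp
    rw [hsplit]
    have h2m : (n:ℝ) ≤ 2 * m := by
      rw [hnm]
      have : (4:ℝ) * ℓ ≤ n := by exact_mod_cast h4ℓ
      linarith [hnm]
    have hcx : 1 + 8 * ((k:ℝ) * x) ≤ c := by
      rw [hc, hx]
      have h1 : 8 * ((k:ℝ) * (2 * ℓ / m)) ≤ 32 * ℓ^2 / m := by
        rw [show 8 * ((k:ℝ) * (2 * ℓ / m)) = 16 * k * ℓ / m from by ring]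
        rw [div_le_div_iff₀ hmR hmR]
        have hl0 : (0:ℝ) ≤ (ℓ:ℝ) := Nat.cast_nonneg ℓ
        nlinarith [mul_nonneg (mul_nonneg (sub_nonneg.2 hk2ℓ) hl0) hmR.le]
      have h2 : 32 * (ℓ:ℝ)^2 / m ≤ 64 * ℓ^2 / n := by
        rw [div_le_div_iff₀ hmR hn0]
        have hl0 : (0:ℝ) ≤ (ℓ:ℝ) := Nat.cast_nonneg ℓ
        nlinarith [h2m, hl0, hmR]
      linarith
    calc (m:ℝ)^k * (1+x)^k ≤ (m:ℝ)^k * (1 + 8 * ((k:ℝ)*x)) := by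
          apply mul_le_mul_of_nonneg_left hb (by positivity)
      _ ≤ (m:ℝ)^k * c := mul_le_mul_of_nonneg_left hcx (by positivity)
      _ = c * (m:ℝ)^k := by ring
  -- descFactorial facts
  have hdA : ((n - 2*r).factorial : ℝ) * (n.descFactorial (2*r) : ℝ) = (n.factorial : ℝ) := by
    exact_mod_cast congrArg (Nat.cast (R := ℝ)) (Nat.factorial_mul_descFactorial (show 2*r ≤ n by omega))
  have hdB : ((n - ℓ - r).factorial : ℝ) * ((n - ℓ).descFactorial r : ℝ) = ((n - ℓ).factorial : ℝ) := by
    exact_mod_cast congrArg (Nat.cast (R := ℝ)) (Nat.factorial_mul_descFactorial (show r ≤ n - ℓ by omega))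
  have hdC : ((n - ℓ - r).factorial : ℝ) * ((n - ℓ - r + (3*r - t)).descFactorial (3*r - t) : ℝ)
      = ((n - ℓ - r + (3*r - t)).factorial : ℝ) := by
    have h := Nat.factorial_mul_descFactorial (show 3*r - t ≤ n - ℓ - r + (3*r - t) by omega)
    rw [show n - ℓ - r + (3*r - t) - (3*r - t) = n - ℓ - r from by omega] at h
    exact_mod_cast congrArg (Nat.cast (R := ℝ)) h
  -- bounds on descFactorials
  have bA : (n.descFactorial (2*r) : ℝ) ≤ (n:ℝ) ^ (2*r) := by
    exact_mod_cast Nat.descFactorial_le_pow n (2*r)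
  have bB : (m:ℝ) ^ r ≤ ((n - ℓ).descFactorial r : ℝ) := by
    have h1 : m ^ r ≤ (n - ℓ + 1 - r) ^ r := Nat.pow_le_pow_left (by omega) r
    have h2 := Nat.pow_sub_le_descFactorial (n - ℓ) r
    exact_mod_cast le_trans h1 h2
  have bC : (m:ℝ) ^ (3*r - t) ≤ ((n - ℓ - r + (3*r - t)).descFactorial (3*r - t) : ℝ) := by
    have h1 : m ^ (3*r - t) ≤ (n - ℓ - r + (3*r - t) + 1 - (3*r - t)) ^ (3*r - t) :=
      Nat.pow_le_pow_left (by omega) _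
    have h2 := Nat.pow_sub_le_descFactorial (n - ℓ - r + (3*r - t)) (3*r - t)
    exact_mod_cast le_trans h1 h2
  have dApos : (0:ℝ) ≤ (n.descFactorial (2*r) : ℝ) := Nat.cast_nonneg _
  have dBpos : (0:ℝ) < ((n - ℓ).descFactorial r : ℝ) := lt_of_lt_of_le (pow_pos hmR r) bB
  have dCpos : (0:ℝ) < ((n - ℓ - r + (3*r - t)).descFactorial (3*r - t) : ℝ) :=
    lt_of_lt_of_le (pow_pos hmR (3*r - t)) bC
  have hdBne : ((n - ℓ).descFactorial r : ℝ) ≠ 0 := ne_of_gt dBpos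
  have hdCne : ((n - ℓ - r + (3*r - t)).descFactorial (3*r - t) : ℝ) ≠ 0 := ne_of_gt dCpos
  -- key: dA^2 ≤ c * n^t * (dB * dC)
  have key : (n.descFactorial (2*r) : ℝ) ^ 2 ≤
      c * (n:ℝ)^t * (((n - ℓ).descFactorial r : ℝ) * ((n - ℓ - r + (3*r - t)).descFactorial (3*r - t) : ℝ)) := by
    calc (n.descFactorial (2*r) : ℝ) ^ 2 ≤ ((n:ℝ)^(2*r))^2 := by
          apply pow_le_pow_left₀ dApos bA
      _ = (n:ℝ)^t * (n:ℝ)^(4*r - t) := by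
          rw [← pow_mul, ← pow_add]
          congr 1
          omega
      _ ≤ (n:ℝ)^t * (c * (m:ℝ)^(4*r - t)) := by
          apply mul_le_mul_of_nonneg_left main_pow (by positivity)
      _ = c * (n:ℝ)^t * ((m:ℝ)^r * (m:ℝ)^(3*r - t)) := by
          rw [← pow_add]
          rw [show r + (3*r - t) = 4*r - t from by omega]
          ring
      _ ≤ c * (n:ℝ)^t * (((n - ℓ).descFactorial r : ℝ) * ((n - ℓ - r + (3*r - t)).descFactorial (3*r - t) : ℝ)) := by
          apply mul_le_mul_of_nonneg_left _ (by positivity)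
          apply mul_le_mul bB bC (by positivity) (le_of_lt dBpos)
  -- (★')
  have hstar : ((n.factorial : ℝ) / ((n - ℓ).factorial : ℝ)) * ((n.factorial : ℝ) / ((n - ℓ - r + (3*r - t)).factorial : ℝ))
      ≤ c * (n:ℝ)^t * (((n - 2*r).factorial : ℝ) / ((n - ℓ - r).factorial : ℝ))^2 := by
    have e1 : ((n.factorial : ℝ) / ((n - ℓ).factorial : ℝ)) * ((n.factorial : ℝ) / ((n - ℓ - r + (3*r - t)).factorial : ℝ))
        = (((n - 2*r).factorial : ℝ)^2 / (((n - ℓ - r).factorial : ℝ))^2) *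
          ((n.descFactorial (2*r) : ℝ)^2 / (((n - ℓ).descFactorial r : ℝ) * ((n - ℓ - r + (3*r - t)).descFactorial (3*r - t) : ℝ))) := by
      rw [← hdA, ← hdB, ← hdC]
      field_simp
    have e2 : c * (n:ℝ)^t * (((n - 2*r).factorial : ℝ) / ((n - ℓ - r).factorial : ℝ))^2
        = (((n - 2*r).factorial : ℝ)^2 / (((n - ℓ - r).factorial : ℝ))^2) * (c * (n:ℝ)^t) := by
      rw [div_pow]; ring
    rw [e1, e2]
    apply mul_le_mul_of_nonneg_left _ (by positivity)
    rw [div_le_iff₀ (mul_pos dBpos dCpos)]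
    exact key
  -- assemble
  set N := (n.factorial : ℝ)
  set M := ((n - 2*r).factorial : ℝ)
  set F1 := (ℓ.factorial : ℝ)
  set F2 := ((ℓ - 2*r + t).factorial : ℝ)
  set F3 := ((ℓ - r).factorial : ℝ)
  set F4 := ((r - t).factorial : ℝ)
  set F5 := (r.factorial : ℝ)
  set F6 := (t.factorial : ℝ)
  set G1 := ((n - ℓ).factorial : ℝ)
  set G2 := ((n - ℓ - r + (3*r - t)).factorial : ℝ)
  set G3 := ((n - ℓ - r).factorial : ℝ)
  have hk0 : (0:ℝ) ≤ (F5 / (F6 * F4)) * F6 * F3^2 * G3^2 / (F1 * F2 * M^2) := by positivity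
  calc (F5 / (F6 * F4)) * F6 * (N / (F1 * G1)) * (N / (F2 * G2)) / (M / (F3 * G3))^2
      = ((F5 / (F6 * F4)) * F6 * F3^2 * G3^2 / (F1 * F2 * M^2)) * ((N / G1) * (N / G2)) := by
        field_simp
    _ ≤ ((F5 / (F6 * F4)) * F6 * F3^2 * G3^2 / (F1 * F2 * M^2)) * (c * (n:ℝ)^t * (M / G3)^2) := by
        exact mul_le_mul_of_nonneg_left hstar hk0
    _ = c * (n:ℝ)^t * (F3 / (F4 * F2)) / (F1 / (F5 * F3)) := by
        field_simp
end

section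
/- Suppose for every u, v ∈ [n] the weight functions H_u satisfy the δ-smoothness condition ∑_{C ∈ [n]³ : v ∈ C} wt_{H_u}(C) ≤ 1/(δn), and each has total weight ∑_C wt_{H_u}(C) ≤ 1. Fix i ∈ [n], r ≥ 0, and a pattern Z ∈ ([n] ∪ {⋆})^{r+1} × {⋆} specifying for each link h ∈ {1,...,r+1} either a forced vertex Z_h ∈ [n] or a free slot ⋆. Then the total weight of all (r+1)-chains C with head i such that for every h with Z_h ≠ ⋆ the h-th link's vertex pair {v_{2(h−1)+1}, v_{2(h−1)+2}} contains Z_h, is at most (δn)^{−|Z|}, where |Z| is the number of non-⋆ entries. -/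
open Finset

lemma step15 (n : ℕ) (δ : ℝ) (hδ : 0 < δ) (hn : 0 < n)
    (wtH : Fin n → Fin n × Fin n × Fin n → ℝ)
    (hnn : ∀ w c, 0 ≤ wtH w c)
    (htot : ∀ w, ∑ c : Fin n × Fin n × Fin n, wtH w c ≤ 1)
    (hsmooth : ∀ w z : Fin n,
      ∑ c ∈ Finset.univ.filter
          (fun c : Fin n × Fin n × Fin n => c.1 = z ∨ c.2.1 = z ∨ c.2.2 = z),
        wtH w c ≤ 1 / (δ * n))
    (i : Fin n) (o : Option (Fin n)) (g : Fin n → ℝ) (B : ℝ) (hB : 0 ≤ B)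
    (hgB : ∀ u, g u ≤ B) :
    ∑ c ∈ Finset.univ.filter
        (fun c : Fin n × Fin n × Fin n =>
          ∀ z : Fin n, o = some z → (c.1 = z ∨ c.2.1 = z)),
      wtH i c * g c.2.2
      ≤ B * ((δ * n)⁻¹) ^ (if o.isSome then 1 else 0) := by
  have hδn : (0:ℝ) < δ * n := by positivity
  cases o with
  | none =>
    simp only [Option.isSome_none, Bool.false_eq_true, if_false, pow_zero, mul_one]
    have he : (Finset.univ.filter fun c : Fin n × Fin n × Fin n =>
        ∀ z : Fin n, (none : Option (Fin n)) = some z → (c.1 = z ∨ c.2.1 = z)) =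
        Finset.univ := by
      apply Finset.filter_true_of_mem; intro c _ z hz; cases hz
    rw [he]
    calc ∑ c : Fin n × Fin n × Fin n, wtH i c * g c.2.2
        ≤ ∑ c : Fin n × Fin n × Fin n, wtH i c * B :=
          Finset.sum_le_sum fun c _ => mul_le_mul_of_nonneg_left (hgB _) (hnn _ _)
      _ = (∑ c : Fin n × Fin n × Fin n, wtH i c) * B := by rw [Finset.sum_mul]
      _ ≤ 1 * B := mul_le_mul_of_nonneg_right (htot i) hB
      _ = B := one_mul B
  | some z =>
    simp only [Option.isSome_some, if_true, pow_one]
    have he : (Finset.univ.filter fun c : Fin n × Fin n × Fin n =>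
        ∀ z' : Fin n, (some z : Option (Fin n)) = some z' → (c.1 = z' ∨ c.2.1 = z')) =
        Finset.univ.filter fun c : Fin n × Fin n × Fin n => c.1 = z ∨ c.2.1 = z := by
      apply Finset.filter_congr; intro c _
      constructor
      · intro h; exact h z rfl
      · intro h z' hz'; cases Option.some_injective _ hz'; exact h
    rw [he]
    calc ∑ c ∈ Finset.univ.filter
          (fun c : Fin n × Fin n × Fin n => c.1 = z ∨ c.2.1 = z), wtH i c * g c.2.2
        ≤ ∑ c ∈ Finset.univ.filter
          (fun c : Fin n × Fin n × Fin n => c.1 = z ∨ c.2.1 = z), wtH i c * B :=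
          Finset.sum_le_sum fun c _ => mul_le_mul_of_nonneg_left (hgB _) (hnn _ _)
      _ = (∑ c ∈ Finset.univ.filter
          (fun c : Fin n × Fin n × Fin n => c.1 = z ∨ c.2.1 = z), wtH i c) * B := by
          rw [Finset.sum_mul]
      _ ≤ (∑ c ∈ Finset.univ.filter
          (fun c : Fin n × Fin n × Fin n => c.1 = z ∨ c.2.1 = z ∨ c.2.2 = z),
            wtH i c) * B := by
          apply mul_le_mul_of_nonneg_right _ hB
          apply Finset.sum_le_sum_of_subset_of_nonneg
          · intro c hc
            simp only [Finset.mem_filter, Finset.mem_univ, true_and] at hc ⊢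
            tauto
          · intro c _ _; exact hnn _ _
      _ ≤ (1 / (δ * n)) * B := mul_le_mul_of_nonneg_right (hsmooth i z) hB
      _ = B * (δ * n)⁻¹ := by rw [one_div]; ring

/-- Smoothness of chains: if each `wt_{H_w}` has total weight at most 1 and satisfies the
`δ`-smoothness condition (the total weight of triples containing any fixed vertex is at
most `1/(δn)`), then for any pattern `Z` forcing some links of an `(r+1)`-chain with head
`i` to contain specified vertices, the total weight of all conforming chains is at most
`(δn)^{−|Z|}`. -/
theorem stmt15 (n r : ℕ) (δ : ℝ) (hδ : 0 < δ) (hn : 0 < n)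
    (wtH : Fin n → Fin n × Fin n × Fin n → ℝ)
    (hnn : ∀ w c, 0 ≤ wtH w c)
    (htot : ∀ w, ∑ c : Fin n × Fin n × Fin n, wtH w c ≤ 1)
    (hsmooth : ∀ w z : Fin n,
      ∑ c ∈ Finset.univ.filter
          (fun c : Fin n × Fin n × Fin n => c.1 = z ∨ c.2.1 = z ∨ c.2.2 = z),
        wtH w c ≤ 1 / (δ * n))
    (i : Fin n) (Z : Fin (r + 1) → Option (Fin n)) :
    ∑ pc ∈ Finset.univ.filter
        (fun pc : (Fin (r + 2) → Fin n) × (Fin (r + 1) → Fin n × Fin n) =>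
          pc.1 0 = i ∧
          ∀ h : Fin (r + 1), ∀ z : Fin n, Z h = some z →
            ((pc.2 h).1 = z ∨ (pc.2 h).2 = z)),
      ∏ h : Fin (r + 1),
        wtH (pc.1 h.castSucc) ((pc.2 h).1, (pc.2 h).2, pc.1 h.succ)
      ≤ ((δ * n)⁻¹) ^ ((Finset.univ.filter (fun h : Fin (r + 1) => (Z h).isSome)).card) := by
  have hδn : (0:ℝ) < δ * n := by positivity
  induction r generalizing i with
  | zero =>
    have hcard : (Finset.univ.filter (fun h : Fin 1 => (Z h).isSome)).card
        = if (Z 0).isSome then 1 else 0 := by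
      rw [Finset.card_filter, Fin.sum_univ_one]
    have hL : (∑ pc ∈ Finset.univ.filter
        (fun pc : (Fin 2 → Fin n) × (Fin 1 → Fin n × Fin n) =>
          pc.1 0 = i ∧
          ∀ h : Fin 1, ∀ z : Fin n, Z h = some z →
            ((pc.2 h).1 = z ∨ (pc.2 h).2 = z)),
      ∏ h : Fin 1,
        wtH (pc.1 h.castSucc) ((pc.2 h).1, (pc.2 h).2, pc.1 h.succ))
      = ∑ c ∈ Finset.univ.filter
        (fun c : Fin n × Fin n × Fin n =>
          ∀ z : Fin n, Z 0 = some z → (c.1 = z ∨ c.2.1 = z)),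
        wtH i c * (fun _ : Fin n => (1:ℝ)) c.2.2 := by
      apply Finset.sum_nbij'
        (i := fun pc : (Fin 2 → Fin n) × (Fin 1 → Fin n × Fin n) =>
          ((pc.2 0).1, (pc.2 0).2, pc.1 1))
        (j := fun c : Fin n × Fin n × Fin n =>
          (![i, c.2.2], fun _ : Fin 1 => (c.1, c.2.1)))
      · intro pc hpc
        simp only [Finset.mem_filter, Finset.mem_univ, true_and] at hpc ⊢
        intro z hz
        exact hpc.2 0 z hz
      · intro c hc
        simp only [Finset.mem_filter, Finset.mem_univ, true_and] at hc ⊢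
        refine ⟨rfl, ?_⟩
        intro h z hz
        have := hc z
        fin_cases h
        exact this hz
      · intro pc hpc
        simp only [Finset.mem_filter, Finset.mem_univ, true_and] at hpc
        obtain ⟨p, q⟩ := pc
        refine Prod.ext ?_ ?_
        · funext x; fin_cases x
          · exact hpc.1.symm
          · simp
        · funext x
          rw [Subsingleton.elim x (0 : Fin 1)]
      · intro c hc
        simp
      · intro pc hpc
        simp only [Finset.mem_filter, Finset.mem_univ, true_and] at hpc
        rw [Fin.prod_univ_one]
        simp [hpc.1, mul_one]
    rw [hL, hcard]
    have := step15 n δ hδ hn wtH hnn htot hsmooth i (Z 0)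
      (fun _ : Fin n => (1:ℝ)) 1 zero_le_one (fun _ => le_rfl)
    simpa using this
  | succ r ih =>
    set Z' : Fin (r + 1) → Option (Fin n) := fun h => Z h.succ with hZ'
    set B : ℝ := ((δ * n)⁻¹) ^
        ((Finset.univ.filter (fun h : Fin (r + 1) => (Z' h).isSome)).card) with hBdef
    set g : Fin n → ℝ := fun u => ∑ pc ∈ Finset.univ.filter
        (fun pc : (Fin (r + 2) → Fin n) × (Fin (r + 1) → Fin n × Fin n) =>
          pc.1 0 = u ∧ ∀ h : Fin (r + 1), ∀ z : Fin n, Z' h = some z →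
            ((pc.2 h).1 = z ∨ (pc.2 h).2 = z)),
      ∏ h : Fin (r + 1),
        wtH (pc.1 h.castSucc) ((pc.2 h).1, (pc.2 h).2, pc.1 h.succ) with hgdef
    have hB0 : (0:ℝ) ≤ B := by positivity
    have hgB : ∀ u, g u ≤ B := fun u => ih u Z'
    have key := step15 n δ hδ hn wtH hnn htot hsmooth i (Z 0) g B hB0 hgB
    have hmain : (∑ pc ∈ Finset.univ.filter
        (fun pc : (Fin (r + 1 + 2) → Fin n) × (Fin (r + 1 + 1) → Fin n × Fin n) =>
          pc.1 0 = i ∧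
          ∀ h : Fin (r + 1 + 1), ∀ z : Fin n, Z h = some z →
            ((pc.2 h).1 = z ∨ (pc.2 h).2 = z)),
      ∏ h : Fin (r + 1 + 1),
        wtH (pc.1 h.castSucc) ((pc.2 h).1, (pc.2 h).2, pc.1 h.succ))
      = ∑ c ∈ Finset.univ.filter
        (fun c : Fin n × Fin n × Fin n =>
          ∀ z : Fin n, Z 0 = some z → (c.1 = z ∨ c.2.1 = z)),
        wtH i c * g c.2.2 := by
      rw [show (∑ c ∈ Finset.univ.filter
          (fun c : Fin n × Fin n × Fin n =>
            ∀ z : Fin n, Z 0 = some z → (c.1 = z ∨ c.2.1 = z)),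
          wtH i c * g c.2.2)
        = ∑ c ∈ Finset.univ.filter
          (fun c : Fin n × Fin n × Fin n =>
            ∀ z : Fin n, Z 0 = some z → (c.1 = z ∨ c.2.1 = z)),
          ∑ pc ∈ Finset.univ.filter
            (fun pc : (Fin (r + 2) → Fin n) × (Fin (r + 1) → Fin n × Fin n) =>
              pc.1 0 = c.2.2 ∧ ∀ h : Fin (r + 1), ∀ z : Fin n, Z' h = some z →
                ((pc.2 h).1 = z ∨ (pc.2 h).2 = z)),
            wtH i c * ∏ h : Fin (r + 1),
              wtH (pc.1 h.castSucc) ((pc.2 h).1, (pc.2 h).2, pc.1 h.succ)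
        from Finset.sum_congr rfl fun c _ => by rw [hgdef]; exact Finset.mul_sum _ _ _]
      rw [Finset.sum_sigma']
      symm
      apply Finset.sum_nbij'
        (i := fun x : Σ _ : Fin n × Fin n × Fin n,
            (Fin (r + 2) → Fin n) × (Fin (r + 1) → Fin n × Fin n) =>
          (Fin.cons i x.2.1, Fin.cons (x.1.1, x.1.2.1) x.2.2))
        (j := fun pc : (Fin (r + 1 + 2) → Fin n) × (Fin (r + 1 + 1) → Fin n × Fin n) =>
          ⟨((pc.2 0).1, (pc.2 0).2, pc.1 1), (Fin.tail pc.1, Fin.tail pc.2)⟩)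
      · -- maps sigma → chain filter
        rintro ⟨c, p', q'⟩ hx
        simp only [Finset.mem_sigma, Finset.mem_filter, Finset.mem_univ, true_and] at hx ⊢
        refine ⟨Fin.cons_zero _ _, ?_⟩
        intro h
        refine Fin.cases ?_ ?_ h
        · intro z hz
          simp only [Fin.cons_zero]
          exact hx.1 z hz
        · intro j z hz
          simp only [Fin.cons_succ]
          exact hx.2.2 j z hz
      · -- maps chain filter → sigma
        intro pc hpc
        simp only [Finset.mem_filter, Finset.mem_univ, true_and] at hpc
        simp only [Finset.mem_sigma, Finset.mem_filter, Finset.mem_univ, true_and]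
        refine ⟨fun z hz => hpc.2 0 z hz, ?_, ?_⟩
        · show pc.1 (Fin.succ 0) = pc.1 1
          rw [Fin.succ_zero_eq_one]
        · intro h z hz
          exact hpc.2 h.succ z hz
      · -- left inverse
        rintro ⟨c, p', q'⟩ hx
        simp only [Finset.mem_sigma, Finset.mem_filter, Finset.mem_univ, true_and] at hx
        have h0 : p' 0 = c.2.2 := hx.2.1
        have h1 : (Fin.cons i p' : Fin (r + 1 + 2) → Fin n) 1 = c.2.2 := by
          rw [show (1 : Fin (r + 1 + 2)) = Fin.succ 0 from (Fin.succ_zero_eq_one).symm,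
            Fin.cons_succ]
          exact h0
        simp only [Fin.cons_zero, Fin.cons_succ, Fin.tail_cons, h1]
      · -- right inverse
        intro pc hpc
        simp only [Finset.mem_filter, Finset.mem_univ, true_and] at hpc
        show (Fin.cons i (Fin.tail pc.1), Fin.cons (pc.2 0) (Fin.tail pc.2)) = pc
        rw [← hpc.1]
        rw [Fin.cons_self_tail, Fin.cons_self_tail]
      · -- summand equality
        rintro ⟨c, p', q'⟩ hx
        simp only [Finset.mem_sigma, Finset.mem_filter, Finset.mem_univ, true_and] at hx
        have h0 : p' 0 = c.2.2 := hx.2.1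
        conv_rhs => rw [Fin.prod_univ_succ]
        congr 1
        · simp only [Fin.cons_zero, Fin.cons_succ, Fin.castSucc_zero, h0]
    rw [hmain]
    have hcard : ((Finset.univ.filter (fun h : Fin (r + 1 + 1) => (Z h).isSome)).card)
        = (if (Z 0).isSome then 1 else 0)
          + ((Finset.univ.filter (fun h : Fin (r + 1) => (Z' h).isSome)).card) := by
      rw [Finset.card_filter, Finset.card_filter, Fin.sum_univ_succ]
    rw [hcard]
    calc ∑ c ∈ Finset.univ.filter
          (fun c : Fin n × Fin n × Fin n =>
            ∀ z : Fin n, Z 0 = some z → (c.1 = z ∨ c.2.1 = z)),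
          wtH i c * g c.2.2
        ≤ B * ((δ * n)⁻¹) ^ (if (Z 0).isSome then 1 else 0) := key
      _ = ((δ * n)⁻¹) ^ ((if (Z 0).isSome then 1 else 0)
            + ((Finset.univ.filter (fun h : Fin (r + 1) => (Z' h).isSome)).card)) := by
          rw [hBdef, pow_add]; ring
end
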